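/- If a set of unitaries {U₀,…,U_{t−1}} on A ⊗ B satisfies an ε-metric uncertainty relation on A (with ε < 1/(2e)), then it satisfies an entropic uncertainty relation: for every unit vector |ψ⟩ ∈ A ⊗ B, the average Shannon entropy (1/t)Σ_k H(p_{U_k|ψ⟩}) is at least (1 − 2ε)log d_A − η(ε), where η(ε) = −2ε ln(2ε). -/

import Mathlib

open Finset Real

/-! For a distribution `q` on `d` points at total variation distance `δ` from the uniform one,
summing the convexity bound `x log (d x) ≤ log d · (|x - 1/d| + x - 1/d)` over `x = q i` gives
`log d - H(q) ≤ 2 δ log d`; no `η` term appears because one of the two distributions is uniform.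
Entropy only grows from the marginal on `A` to the joint distribution on `A × B`, and the bound
is affine in `δ`, so averaging over `k` turns the metric uncertainty relation into
`(1/t) Σ_k H ≥ (1 - 2ε) log d_A`. This dominates the claimed bound since `2ε log (2ε) ≤ 0`
when `2ε ≤ 1`. -/

lemma mul_log_add_affine_nonpos_of_mem_Icc {a b A B x : ℝ} (hA : 0 ≤ A) (hx : x ∈ Set.Icc A B)
    (hfA : A * log A + (a * A + b) ≤ 0) (hfB : B * log B + (a * B + b) ≤ 0) :
    x * log x + (a * x + b) ≤ 0 := by
  have hconv : ConvexOn ℝ (Set.Ici 0) fun x ↦ x * log x + (a * x + b) :=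
    convexOn_mul_log.add (((LinearMap.mul ℝ ℝ a).convexOn (convex_Ici 0)).add_const b)
  have hAB : A ≤ B := hx.1.trans hx.2
  refine (hconv.le_on_segment hA (hA.trans hAB) ?_).trans (max_le hfA hfB)
  rwa [segment_eq_Icc hAB]

/-- By convexity, `x ↦ x log (n x)` is `≤ 0` on `[0, 1/n]`, where it vanishes at both ends,
and `≤ 2 log n · (x - 1/n)` on `[1/n, 1]`, which holds at `x = 1` as `n ≥ 2` or `log n = 0`. -/
lemma mul_log_add_mul_log_natCast_le (n : ℕ) {x : ℝ} (hx₀ : 0 ≤ x) (hx₁ : x ≤ 1) :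
    x * log x + x * log n ≤ log n * (|x - (n : ℝ)⁻¹| + (x - (n : ℝ)⁻¹)) := by
  set u : ℝ := (n : ℝ)⁻¹
  have hu₀ : 0 ≤ u := by positivity
  have hu : u * log u + (log n * u + 0) = 0 := by simp only [u, log_inv]; ring
  rcases le_total x u with hxu | hux
  · have h := mul_log_add_affine_nonpos_of_mem_Icc (a := log n) (b := 0) le_rfl ⟨hx₀, hxu⟩
      (by simp) hu.le
    rw [abs_of_nonpos (sub_nonpos.2 hxu)]
    linear_combination h
  · have hend : log n * (2 * u - 1) ≤ 0 := by
      rcases le_or_gt n 1 with hn | hn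
      · interval_cases n <;> simp
      · have h2u : 2 * u ≤ 1 := by
          rw [← div_eq_mul_inv, div_le_one (by positivity)]
          exact_mod_cast hn
        exact mul_nonpos_of_nonneg_of_nonpos (log_natCast_nonneg n) (by linarith)
    have h := mul_log_add_affine_nonpos_of_mem_Icc (a := -log n) (b := 2 * log n * u) hu₀
      ⟨hux, hx₁⟩ (by linear_combination hu)
      (by rw [log_one]; linear_combination hend)
    rw [abs_of_nonneg (sub_nonneg.2 hux)]
    linear_combination h

theorem sum_mul_log_add_log_card_le {ι : Type*} [Fintype ι] {q : ι → ℝ}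
    (hq₀ : ∀ i, 0 ≤ q i) (hq : ∑ i, q i = 1) :
    ∑ i, q i * log (q i) + log (Fintype.card ι)
      ≤ log (Fintype.card ι) * ∑ i, |q i - (Fintype.card ι : ℝ)⁻¹| := by
  set n := Fintype.card ι
  have hq₁ : ∀ i, q i ≤ 1 := fun i ↦ hq ▸ single_le_sum (fun j _ ↦ hq₀ j) (mem_univ i)
  have hn : (n : ℝ) ≠ 0 := by
    have : (univ : Finset ι).Nonempty := nonempty_of_sum_ne_zero (hq ▸ one_ne_zero)
    exact_mod_cast (card_pos.2 this).ne'
  calc ∑ i, q i * log (q i) + log n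
      = ∑ i, (q i * log (q i) + q i * log n) := by
        rw [sum_add_distrib, ← sum_mul, hq, one_mul]
    _ ≤ ∑ i, log n * (|q i - (n : ℝ)⁻¹| + (q i - (n : ℝ)⁻¹)) :=
        sum_le_sum fun i _ ↦ mul_log_add_mul_log_natCast_le n (hq₀ i) (hq₁ i)
    _ = log n * ∑ i, |q i - (n : ℝ)⁻¹| := by
        rw [← mul_sum, sum_add_distrib, sum_sub_distrib, hq, sum_const, card_univ, nsmul_eq_mul,
          mul_inv_cancel₀ hn, sub_self, add_zero]

theorem sum_mul_log_le_mul_log_sum {ι : Type*} (s : Finset ι) {p : ι → ℝ}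
    (hp : ∀ i ∈ s, 0 ≤ p i) :
    ∑ i ∈ s, p i * log (p i) ≤ (∑ i ∈ s, p i) * log (∑ i ∈ s, p i) := by
  rw [sum_mul]
  refine sum_le_sum fun i hi ↦ ?_
  rcases (hp i hi).eq_or_lt with h | h
  · simp [← h]
  · exact mul_le_mul_of_nonneg_left (log_le_log h (single_le_sum hp hi)) h.le

theorem sum_mul_log_le_sum_mul_log_marginal {α β : Type*} [Fintype α] [Fintype β]
    {p : α × β → ℝ} (hp : ∀ x, 0 ≤ p x) :
    ∑ x, p x * log (p x) ≤ ∑ a, (∑ b, p (a, b)) * log (∑ b, p (a, b)) := by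
  rw [Fintype.sum_prod_type]
  exact sum_le_sum fun a _ ↦ sum_mul_log_le_mul_log_sum _ fun b _ ↦ hp (a, b)

theorem mul_logb_card_le_entropy {α β : Type*} [Fintype α] [Fintype β] {p : α × β → ℝ}
    (hp₀ : ∀ x, 0 ≤ p x) (hp : ∑ x, p x = 1) :
    (1 - ∑ a, |∑ b, p (a, b) - (Fintype.card α : ℝ)⁻¹|) * logb 2 (Fintype.card α)
      ≤ ∑ x, -(p x * logb 2 (p x)) := by
  have hdeficit := sum_mul_log_add_log_card_le (fun a ↦ sum_nonneg fun b _ ↦ hp₀ (a, b))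
    (Fintype.sum_prod_type p ▸ hp)
  have hmarginal := sum_mul_log_le_sum_mul_log_marginal hp₀
  have hH : ∑ x, -(p x * logb 2 (p x)) = -(∑ x, p x * log (p x)) / log 2 := by
    simp only [logb, neg_div, sum_div, ← sum_neg_distrib, mul_div_assoc]
  rw [hH, logb, mul_div_assoc', div_le_div_iff_of_pos_right (log_pos one_lt_two)]
  linarith

theorem sum_norm_sq_mulVec_of_mem_unitaryGroup {n : Type*} [Fintype n] [DecidableEq n]
    {U : Matrix n n ℂ} (hU : U ∈ Matrix.unitaryGroup n ℂ) (ψ : EuclideanSpace ℂ n) :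
    ∑ x, ‖U.mulVec ψ x‖ ^ 2 = ‖ψ‖ ^ 2 := by
  have hU' := Unitary.map_mem (Matrix.toEuclideanCLM (n := n) (𝕜 := ℂ)) hU
  rw [← ContinuousLinearMap.norm_map_of_mem_unitary hU' ψ, EuclideanSpace.norm_sq_eq]
  simp

theorem stmt8 (dA dB t : ℕ) (ht : 0 < t)
    (ε : ℝ) (hε : 0 < ε) (hε' : ε < 1 / (2 * Real.exp 1))
    (U : Fin t → Matrix (Fin dA × Fin dB) (Fin dA × Fin dB) ℂ)
    (hU : ∀ k, U k ∈ Matrix.unitaryGroup (Fin dA × Fin dB) ℂ)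
    (hMUR : ∀ ψ : EuclideanSpace ℂ (Fin dA × Fin dB), ‖ψ‖ = 1 →
      (1 / (t : ℝ)) * ∑ k, (1 / 2) * ∑ a : Fin dA,
          |(∑ b : Fin dB, ‖(U k).mulVec ψ (a, b)‖ ^ 2) - 1 / (dA : ℝ)| ≤ ε) :
    ∀ ψ : EuclideanSpace ℂ (Fin dA × Fin dB), ‖ψ‖ = 1 →
      (1 - 2 * ε) * Real.logb 2 dA - (-(2 * ε) * Real.log (2 * ε))
        ≤ (1 / (t : ℝ)) * ∑ k, ∑ x : Fin dA × Fin dB,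
            -(‖(U k).mulVec ψ x‖ ^ 2 * Real.logb 2 (‖(U k).mulVec ψ x‖ ^ 2)) := by
  intro ψ hψ
  set S : Fin t → ℝ := fun k ↦
    ∑ a : Fin dA, |(∑ b : Fin dB, ‖(U k).mulVec ψ (a, b)‖ ^ 2) - 1 / (dA : ℝ)|
  have hent : ∀ k, (1 - S k) * logb 2 dA ≤
      ∑ x, -(‖(U k).mulVec ψ x‖ ^ 2 * logb 2 (‖(U k).mulVec ψ x‖ ^ 2)) := fun k ↦ by
    simpa [S, one_div] using mul_logb_card_le_entropy (fun x ↦ sq_nonneg ‖(U k).mulVec ψ x‖)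
      (by rw [sum_norm_sq_mulVec_of_mem_unitaryGroup (hU k), hψ, one_pow])
  have hS_avg : (1 / (t : ℝ)) * ∑ k, S k ≤ 2 * ε := by
    have := hMUR ψ hψ
    rw [← mul_sum] at this
    linarith
  have h2ε : 2 * ε ≤ 1 := by
    rw [lt_div_iff₀ (by positivity)] at hε'
    nlinarith [add_one_le_exp 1]
  have hη : 2 * ε * log (2 * ε) ≤ 0 := mul_log_nonpos (by positivity) h2ε
  have ht' : (t : ℝ) ≠ 0 := by positivity
  have hlogb : 0 ≤ logb 2 dA := div_nonneg (log_natCast_nonneg dA) (log_nonneg one_le_two)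
  calc (1 - 2 * ε) * logb 2 dA - (-(2 * ε) * log (2 * ε))
      ≤ (1 - (1 / (t : ℝ)) * ∑ k, S k) * logb 2 dA := by
        linarith [mul_le_mul_of_nonneg_right hS_avg hlogb]
    _ = (1 / (t : ℝ)) * ∑ k, (1 - S k) * logb 2 dA := by
        rw [← sum_mul, sum_sub_distrib, sum_const, card_univ, Fintype.card_fin, nsmul_eq_mul]
        field_simp
    _ ≤ _ := by gcongr with k; exact hent k
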